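/- arXiv:2103.05830 — 4 statements merged into one kernel-verified Lean document; each statement's English description precedes it below -/
import Mathlib

section
/- Let p ≥ 5 be a prime, r a positive integer, and l a nonnegative integer. Then \sum_{k : \lfloor k/p^r \rfloor = l, \ p \nmid (k+1)} \frac{1}{k+1} \equiv 0 \pmod{p^{2r}}. -/
/-!
Write `n = k + 1` and `N = (2l+1)p^r`. The reflection `n ↦ N - n` permutes the terms of the sum,
and `1/n + 1/(N-n) = -N/n² + N²/(n²(N-n))`, so twice the sum is `-N ∑ 1/n²` up to a multiple of
`p^{2r}`. Modulo `p^r` the `n` run once through the units of `ℤ/p^r`, where `∑ u⁻² = ∑ u²`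
vanishes: multiplying by `2` permutes the units, and `2² - 1 = 3` is invertible since `p ≥ 5`.
-/

open Finset

theorem sum_units_pow_eq_zero_of_isUnit_sub_one {R : Type*} [CommRing R] [Fintype Rˣ] {e : ℕ}
    (g : Rˣ) (hg : IsUnit ((g : R) ^ e - 1)) : ∑ u : Rˣ, (u : R) ^ e = 0 := by
  have hinv : (g : R) ^ e * ∑ u : Rˣ, (u : R) ^ e = ∑ u : Rˣ, (u : R) ^ e := by
    rw [mul_sum]
    exact Fintype.sum_equiv (Equiv.mulLeft g) _ _ fun u => by simp [mul_pow]
  refine hg.mul_right_eq_zero.mp ?_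
  rw [sub_mul, hinv, one_mul, sub_self]

theorem Fintype.sum_ite_isUnit {R M : Type*} [Monoid R] [Fintype R] [Fintype Rˣ]
    [DecidablePred (IsUnit : R → Prop)] [AddCommMonoid M] (f : R → M) :
    ∑ x, (if IsUnit x then f x else 0) = ∑ u : Rˣ, f u := by
  rw [← sum_filter]
  symm
  refine sum_bij (fun u _ => (u : R)) (by simp) (fun _ _ _ _ => Units.ext) ?_ fun _ _ => rfl
  intro x hx
  obtain ⟨u, rfl⟩ := (mem_filter.1 hx).2
  exact ⟨u, mem_univ _, rfl⟩

theorem ZMod.sum_units_sq_eq_zero {n : ℕ} [NeZero n] (hn : Nat.Coprime 6 n) :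
    ∑ u : (ZMod n)ˣ, (u : ZMod n) ^ 2 = 0 := by
  obtain ⟨g, hg⟩ := (ZMod.isUnit_iff_coprime 2 n).2 (hn.coprime_dvd_left (by norm_num))
  refine sum_units_pow_eq_zero_of_isUnit_sub_one g ?_
  rw [hg, show ((2 : ℕ) : ZMod n) ^ 2 - 1 = ((3 : ℕ) : ZMod n) by norm_num, ZMod.isUnit_iff_coprime]
  exact hn.coprime_dvd_left (by norm_num)

theorem ZMod.sum_Ico_natCast {M : Type*} [AddCommMonoid M] (n l : ℕ) [NeZero n]
    (f : ZMod n → M) : ∑ k ∈ Ico (l * n) ((l + 1) * n), f k = ∑ x, f x := by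
  rw [sum_Ico_eq_sum_range, add_one_mul, Nat.add_sub_cancel_left]
  simp only [Nat.cast_add, Nat.cast_mul, ZMod.natCast_self, mul_zero, zero_add]
  exact sum_nbij' Nat.cast ZMod.val (by simp) (by simp [ZMod.val_lt])
    (fun k hk => ZMod.val_cast_of_lt (mem_range.1 hk)) (fun x _ => ZMod.natCast_zmod_val x)
    fun _ _ => rfl

theorem PadicInt.exists_coe_eq_inv_natCast {p : ℕ} [Fact p.Prime] {a : ℕ} (ha : ¬ p ∣ a) :
    ∃ v : ℤ_[p], (v : ℚ_[p]) = (a : ℚ_[p])⁻¹ ∧ ∀ m, toZModPow m v = (a : ZMod (p ^ m))⁻¹ := by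
  have hunit : IsUnit (a : ℤ_[p]) := by
    rw [PadicInt.isUnit_iff, PadicInt.norm_natCast_eq_one_iff]
    exact (Nat.Prime.coprime_iff_not_dvd Fact.out).2 ha
  obtain ⟨v, hv⟩ := hunit.exists_right_inv
  refine ⟨v, eq_inv_of_mul_eq_one_right ?_, fun m => (ZMod.inv_eq_of_mul_eq_one _ _ _ ?_).symm⟩
  · exact_mod_cast congrArg ((↑) : ℤ_[p] → ℚ_[p]) hv
  · rw [← map_natCast (toZModPow m), ← map_mul, hv, map_one]

theorem Padic.norm_sum_inv_pow_le {p : ℕ} [Fact p.Prime] {ι : Type*} (s : Finset ι) (a : ι → ℕ)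
    (ha : ∀ i ∈ s, ¬ p ∣ a i) (e m : ℕ) (h : ∑ i ∈ s, ((a i : ZMod (p ^ m))⁻¹) ^ e = 0) :
    ‖∑ i ∈ s, ((a i : ℚ_[p])⁻¹) ^ e‖ ≤ (p : ℝ) ^ (-(m : ℤ)) := by
  choose! v hvQ hvZ using fun i (hi : i ∈ s) => PadicInt.exists_coe_eq_inv_natCast (ha i hi)
  have hcoe : ((∑ i ∈ s, v i ^ e : ℤ_[p]) : ℚ_[p]) = ∑ i ∈ s, ((a i : ℚ_[p])⁻¹) ^ e := by
    rw [PadicInt.coe_sum]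
    exact sum_congr rfl fun i hi => by rw [PadicInt.coe_pow, hvQ i hi]
  rw [← hcoe, ← PadicInt.norm_def, PadicInt.norm_le_pow_iff_mem_span_pow,
    ← PadicInt.ker_toZModPow, RingHom.mem_ker, map_sum, ← h]
  exact sum_congr rfl fun i hi => by rw [map_pow, hvZ i hi]

theorem norm_two_mul_sum_inv_le_of_involution {K ι : Type*} [NormedField K] [IsUltrametricDist K]
    {s : Finset ι} {σ : ι → ι} (hσ : ∀ i ∈ s, σ i ∈ s) (hσσ : ∀ i ∈ s, σ (σ i) = i)
    {a : ι → K} {N : K} (ha : ∀ i ∈ s, ‖a i‖ = 1) (hsum : ∀ i ∈ s, a i + a (σ i) = N)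
    {ε : ℝ} (hN : ‖N‖ ≤ ε) (hsq : ‖∑ i ∈ s, (a i)⁻¹ ^ 2‖ ≤ ε) :
    ‖2 * ∑ i ∈ s, (a i)⁻¹‖ ≤ ε ^ 2 := by
  have hε : 0 ≤ ε := (norm_nonneg N).trans hN
  have hreflect : ∑ i ∈ s, (a (σ i))⁻¹ = ∑ i ∈ s, (a i)⁻¹ :=
    sum_nbij' σ σ hσ hσ hσσ hσσ fun _ _ => rfl
  have hpair : 2 * ∑ i ∈ s, (a i)⁻¹ + N * ∑ i ∈ s, (a i)⁻¹ ^ 2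
      = N ^ 2 * ∑ i ∈ s, (a i)⁻¹ ^ 2 * (a (σ i))⁻¹ := by
    rw [two_mul]
    nth_rw 2 [← hreflect]
    simp only [mul_sum, ← sum_add_distrib]
    refine sum_congr rfl fun i hi => ?_
    have hai : a i ≠ 0 := norm_ne_zero_iff.1 (by rw [ha i hi]; exact one_ne_zero)
    have haσi : a (σ i) ≠ 0 := norm_ne_zero_iff.1 (by rw [ha _ (hσ i hi)]; exact one_ne_zero)
    rw [← hsum i hi]
    field_simp
    ring
  have hrest : ‖∑ i ∈ s, (a i)⁻¹ ^ 2 * (a (σ i))⁻¹‖ ≤ 1 :=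
    IsUltrametricDist.norm_sum_le_of_forall_le_of_nonneg zero_le_one fun i hi => by
      simp [ha i hi, ha _ (hσ i hi)]
  rw [← add_sub_cancel_right (2 * ∑ i ∈ s, (a i)⁻¹) (N * ∑ i ∈ s, (a i)⁻¹ ^ 2), hpair,
    sub_eq_add_neg]
  refine (IsUltrametricDist.norm_add_le_max _ _).trans (max_le ?_ ?_)
  · rw [norm_mul, norm_pow]
    calc ‖N‖ ^ 2 * _ ≤ ε ^ 2 * 1 := by gcongr
      _ = ε ^ 2 := mul_one _
  · rw [norm_neg, norm_mul, sq]
    exact mul_le_mul hN hsq (norm_nonneg _) hε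

def unitBlock (p r l : ℕ) : Finset ℕ :=
  (Ico (l * p ^ r) ((l + 1) * p ^ r)).filter fun k => ¬ p ∣ (k + 1)

section UnitBlock

variable {p r l k : ℕ}

theorem bounds_of_mem_unitBlock (hr : 0 < r) (hk : k ∈ unitBlock p r l) :
    l * p ^ r ≤ k ∧ k + 2 ≤ (l + 1) * p ^ r := by
  obtain ⟨⟨hlo, hhi⟩, hndvd⟩ := by simpa [unitBlock] using hk
  have hne : k + 1 ≠ (l + 1) * p ^ r := fun h =>
    hndvd (h ▸ dvd_mul_of_dvd_right (dvd_pow_self p hr.ne') _)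
  exact ⟨hlo, by omega⟩

theorem reflect_mem_unitBlock (hr : 0 < r) (hk : k ∈ unitBlock p r l) :
    (2 * l + 1) * p ^ r - 2 - k ∈ unitBlock p r l := by
  obtain ⟨hlo, hhi⟩ := bounds_of_mem_unitBlock hr hk
  have hN : (2 * l + 1) * p ^ r = l * p ^ r + (l + 1) * p ^ r := by ring
  simp only [unitBlock, mem_filter, mem_Ico]
  refine ⟨⟨by omega, by omega⟩, fun hdvd => (mem_filter.1 hk).2 ?_⟩
  have hp : p ∣ (2 * l + 1) * p ^ r := dvd_mul_of_dvd_right (dvd_pow_self p hr.ne') _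
  have := Nat.dvd_sub hp hdvd
  rwa [show (2 * l + 1) * p ^ r - ((2 * l + 1) * p ^ r - 2 - k + 1) = k + 1 by omega] at this

theorem reflect_reflect_of_mem_unitBlock (hr : 0 < r) (hk : k ∈ unitBlock p r l) :
    (2 * l + 1) * p ^ r - 2 - ((2 * l + 1) * p ^ r - 2 - k) = k := by
  have := bounds_of_mem_unitBlock hr hk
  have hN : (2 * l + 1) * p ^ r = l * p ^ r + (l + 1) * p ^ r := by ring
  omega

theorem add_reflect_of_mem_unitBlock (hr : 0 < r) (hk : k ∈ unitBlock p r l) :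
    k + 1 + ((2 * l + 1) * p ^ r - 2 - k + 1) = (2 * l + 1) * p ^ r := by
  have := bounds_of_mem_unitBlock hr hk
  have hN : (2 * l + 1) * p ^ r = l * p ^ r + (l + 1) * p ^ r := by ring
  omega

theorem sum_unitBlock_inv_sq_eq_zero (hp : p.Prime) (hp5 : 5 ≤ p) (hr : 0 < r) (l : ℕ) :
    ∑ k ∈ unitBlock p r l, (((k + 1 : ℕ) : ZMod (p ^ r))⁻¹) ^ 2 = 0 := by
  classical
  have : NeZero (p ^ r) := ⟨pow_ne_zero r hp.ne_zero⟩
  let g : ZMod (p ^ r) → ZMod (p ^ r) := fun x => if IsUnit x then (x⁻¹) ^ 2 else 0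
  have hterm (k : ℕ) : (if ¬ p ∣ (k + 1) then (((k + 1 : ℕ) : ZMod (p ^ r))⁻¹) ^ 2 else 0)
      = g ((k : ZMod (p ^ r)) + 1) := by
    simp only [g, ← ZMod.isUnit_natCast_iff_not_dvd_pow hp hr, Nat.cast_succ]
  have h6 : Nat.Coprime 6 (p ^ r) :=
    .pow_right r (.mul_left ((Nat.coprime_primes Nat.prime_two hp).2 (by omega))
      ((Nat.coprime_primes Nat.prime_three hp).2 (by omega)))
  calc ∑ k ∈ unitBlock p r l, (((k + 1 : ℕ) : ZMod (p ^ r))⁻¹) ^ 2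
      = ∑ k ∈ Ico (l * p ^ r) ((l + 1) * p ^ r), g ((k : ZMod (p ^ r)) + 1) := by
        rw [unitBlock, sum_filter]
        exact sum_congr rfl fun k _ => hterm k
    _ = ∑ x, g (x + 1) := ZMod.sum_Ico_natCast _ _ fun x => g (x + 1)
    _ = ∑ x, g x := Fintype.sum_equiv (Equiv.addRight 1) _ _ fun _ => rfl
    _ = ∑ u : (ZMod (p ^ r))ˣ, ((u : ZMod (p ^ r))⁻¹) ^ 2 := Fintype.sum_ite_isUnit _
    _ = ∑ u : (ZMod (p ^ r))ˣ, (u : ZMod (p ^ r)) ^ 2 := by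
        simp only [ZMod.inv_coe_unit]
        exact Fintype.sum_equiv (Equiv.inv _) _ _ fun _ => rfl
    _ = 0 := ZMod.sum_units_sq_eq_zero h6

end UnitBlock

theorem sum_inv_k_add_one_congruence (p : ℕ) [Fact p.Prime] (hp5 : 5 ≤ p)
    (r : ℕ) (hr : 0 < r) (l : ℕ) :
    ‖∑ k ∈ (Finset.Ico (l * p ^ r) ((l + 1) * p ^ r)).filter
        (fun k => ¬ p ∣ (k + 1)), (((k : ℚ_[p]) + 1))⁻¹‖ ≤
      (p : ℝ) ^ (-(2 * (r : ℤ))) := by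
  have hp : p.Prime := Fact.out
  have hunit : ∀ k ∈ unitBlock p r l, ‖(k : ℚ_[p]) + 1‖ = 1 := fun k hk => by
    exact_mod_cast Padic.norm_natCast_eq_one_iff.2
      ((Nat.Prime.coprime_iff_not_dvd hp).2 (mem_filter.1 hk).2)
  have hN : ‖(((2 * l + 1) * p ^ r : ℕ) : ℚ_[p])‖ ≤ (p : ℝ) ^ (-(r : ℤ)) := by
    exact_mod_cast (Padic.norm_int_le_pow_iff_dvd ((2 * l + 1) * p ^ r : ℕ) r).2
      (by exact_mod_cast Dvd.intro_left _ rfl)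
  have hsq : ‖∑ k ∈ unitBlock p r l, ((k : ℚ_[p]) + 1)⁻¹ ^ 2‖ ≤ (p : ℝ) ^ (-(r : ℤ)) := by
    exact_mod_cast Padic.norm_sum_inv_pow_le (unitBlock p r l) (· + 1)
      (fun k hk => (mem_filter.1 hk).2) 2 r (sum_unitBlock_inv_sq_eq_zero hp hp5 hr l)
  have h2 : ‖(2 : ℚ_[p])‖ = 1 := by
    exact_mod_cast Padic.norm_natCast_eq_one_iff.2
      ((Nat.coprime_primes hp Nat.prime_two).2 (by omega))
  have := norm_two_mul_sum_inv_le_of_involution (fun _ => reflect_mem_unitBlock hr)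
    (fun _ => reflect_reflect_of_mem_unitBlock hr) hunit
    (fun k hk => by exact_mod_cast add_reflect_of_mem_unitBlock hr hk) hN hsq
  rwa [norm_mul, h2, one_mul, ← zpow_natCast, ← zpow_mul, neg_mul, mul_comm] at this
end

section
/- Let p ≥ 5 be a prime and r a positive integer. Then \sum_{k=1, p \nmid k}^{p^r - 1} \frac{1}{k^2} \equiv 0 \pmod{p^r} and \sum_{k=1, p \nmid k}^{(p^r-1)/2} \frac{1}{k^2} \equiv 0 \pmod{p^r}. -/
/-!
Both claims are statements in `ZMod (p ^ r)`: an element of `ℤ_[p]` has norm at most `p⁻ʳ`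
exactly when it vanishes mod `p ^ r`, and reduction mod `p ^ r` commutes with inverting units.
The `k` prime to `p` in `[1, p ^ r)` are the units `u` of `ZMod (p ^ r)`, which are permuted by
`u ↦ u⁻¹` and by `u ↦ 2u`; so `S = ∑ u⁻² = ∑ u²` satisfies `4 S = S`, i.e. `3 S = 0`, and `3` is
a unit because `p ≥ 5`.
The reflection `k ↦ p ^ r - k` preserves `k⁻²`, so the full sum is twice the half sum,
and `2` is a unit as well.
-/

open Finset

theorem sum_units_pow_eq_zero {R : Type*} [CommRing R] [Fintype Rˣ] (a : Rˣ) {m : ℕ}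
    (ha : IsUnit ((a : R) ^ m - 1)) : ∑ u : Rˣ, (u : R) ^ m = 0 := by
  have hS : (a : R) ^ m * ∑ u : Rˣ, (u : R) ^ m = ∑ u : Rˣ, (u : R) ^ m := by
    rw [mul_sum]
    exact Fintype.sum_equiv (Equiv.mulLeft a) _ _ fun u => by simp [mul_pow]
  exact ha.mul_right_eq_zero.mp (by rw [sub_mul, one_mul, hS, sub_self])

theorem ZMod.sum_units_inv_pow_eq_zero {n : ℕ} [NeZero n] (a : (ZMod n)ˣ) {m : ℕ}
    (ha : IsUnit ((a : ZMod n) ^ m - 1)) : ∑ u : (ZMod n)ˣ, ((u : ZMod n) ^ m)⁻¹ = 0 := by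
  calc ∑ u : (ZMod n)ˣ, ((u : ZMod n) ^ m)⁻¹
      = ∑ u : (ZMod n)ˣ, ((u⁻¹ : (ZMod n)ˣ) : ZMod n) ^ m :=
        sum_congr rfl fun u _ => by
          rw [← Units.val_pow_eq_pow_val, inv_coe_unit, ← inv_pow, Units.val_pow_eq_pow_val]
    _ = ∑ u : (ZMod n)ˣ, (u : ZMod n) ^ m := Fintype.sum_equiv (Equiv.inv _) _ _ fun _ => rfl
    _ = 0 := sum_units_pow_eq_zero a ha

theorem ZMod.sum_filter_coprime_range_eq_sum_units {n : ℕ} [NeZero n] {M : Type*}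
    [AddCommMonoid M] (f : ZMod n → M) :
    ∑ k ∈ (range n).filter (·.Coprime n), f k = ∑ u : (ZMod n)ˣ, f u := by
  refine sum_bij' (fun k hk => unitOfCoprime k (mem_filter.1 hk).2) (fun u _ => (u : ZMod n).val)
    (fun _ _ => mem_univ _) (fun u _ => mem_filter.2 ⟨mem_range.2 (val_lt _),
      val_coe_unit_coprime u⟩) (fun k hk => val_cast_of_lt (mem_range.1 (mem_filter.1 hk).1))
    (fun u _ => Units.ext (by simp [coe_unitOfCoprime])) (fun k hk => by simp [coe_unitOfCoprime])

theorem Nat.filter_not_dvd_Icc_eq_filter_coprime_range {p r : ℕ} (hp : p.Prime) (hr : r ≠ 0) :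
    (Icc 1 (p ^ r - 1)).filter (fun k => ¬ p ∣ k) =
      (range (p ^ r)).filter (·.Coprime (p ^ r)) := by
  ext k
  simp only [mem_filter, mem_Icc, mem_range, Nat.coprime_pow_right_iff (Nat.pos_of_ne_zero hr),
    Nat.coprime_comm, hp.coprime_iff_not_dvd]
  have : 0 < p ^ r := pow_pos hp.pos r
  constructor
  · rintro ⟨⟨h1, h2⟩, h⟩; exact ⟨by omega, h⟩
  · rintro ⟨h1, h⟩
    refine ⟨⟨Nat.pos_of_ne_zero ?_, by omega⟩, h⟩
    rintro rfl; exact h (dvd_zero p)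

theorem Finset.sum_Icc_eq_two_nsmul_sum_Icc_half {M : Type*} [AddCommMonoid M] {n : ℕ}
    (hn : Odd n) {g : ℕ → M} (hg : ∀ k ≤ n, g (n - k) = g k) :
    ∑ k ∈ Icc 1 (n - 1), g k = 2 • ∑ k ∈ Icc 1 ((n - 1) / 2), g k := by
  obtain ⟨m, rfl⟩ := hn
  have hm : (2 * m + 1 - 1) / 2 = m := by omega
  have hreflect : ∑ k ∈ Ico (m + 1) (2 * m + 1), g k = ∑ k ∈ Ico 1 (m + 1), g k := by
    rw [← sum_congr rfl fun k hk => hg k (by simp at hk; omega), sum_Ico_reflect _ _ le_self_add]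
    congr 2 <;> omega
  rw [hm, add_tsub_cancel_right, ← Ico_add_one_right_eq_Icc, ← Ico_add_one_right_eq_Icc,
    ← sum_Ico_consecutive _ (by omega : 1 ≤ m + 1) (by omega : m + 1 ≤ 2 * m + 1), hreflect,
    two_nsmul]

theorem ZMod.sum_filter_Icc_eq_two_nsmul_sum_filter_Icc_half {n d : ℕ} (hn : Odd n)
    (hd : d ∣ n) {M : Type*} [AddCommMonoid M] {f : ZMod n → M} (hf : ∀ x, f (-x) = f x) :
    ∑ k ∈ (Icc 1 (n - 1)).filter (fun k => ¬ d ∣ k), f k =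
      2 • ∑ k ∈ (Icc 1 ((n - 1) / 2)).filter (fun k => ¬ d ∣ k), f k := by
  rw [sum_filter, sum_filter]
  refine sum_Icc_eq_two_nsmul_sum_Icc_half hn fun k hk => ?_
  simp only [Nat.dvd_sub_iff_right hk hd, Nat.cast_sub hk, natCast_self, zero_sub, hf]

theorem ZMod.isUnit_natCast_prime_of_ne {p q : ℕ} (hp : p.Prime) (hq : q.Prime) (hqp : q ≠ p)
    (r : ℕ) : IsUnit (q : ZMod (p ^ r)) :=
  (isUnit_iff_coprime q (p ^ r)).2 (((Nat.coprime_primes hq hp).2 hqp).pow_right r)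

theorem RingHom.map_ringInverse {R S : Type*} [Semiring R] [Semiring S] (f : R →+* S) {x : R}
    (hx : IsUnit x) : f (Ring.inverse x) = Ring.inverse (f x) := by
  obtain ⟨u, rfl⟩ := hx
  simpa using (Ring.inverse_unit (Units.map (f : R →* S) u)).symm

theorem ZMod.ringInverse_eq_inv {n : ℕ} {x : ZMod n} (hx : IsUnit x) :
    Ring.inverse x = x⁻¹ := by
  obtain ⟨u, rfl⟩ := hx
  rw [Ring.inverse_unit, ZMod.inv_coe_unit]

theorem PadicInt.norm_sum_inv_natCast_le_pow_iff {p : ℕ} [Fact p.Prime] {ι : Type*}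
    {s : Finset ι} {a : ι → ℕ} (ha : ∀ i ∈ s, p.Coprime (a i)) (r : ℕ) :
    ‖∑ i ∈ s, (a i : ℚ_[p])⁻¹‖ ≤ (p : ℝ) ^ (-(r : ℤ)) ↔
      ∑ i ∈ s, (a i : ZMod (p ^ r))⁻¹ = 0 := by
  have hunit : ∀ i ∈ s, IsUnit (a i : ℤ_[p]) := fun i hi =>
    isUnit_iff.2 (norm_natCast_eq_one_iff.2 (ha i hi))
  set x := ∑ i ∈ s, Ring.inverse (a i : ℤ_[p])
  have hmap {S : Type} [Semiring S] (f : ℤ_[p] →+* S) :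
      f x = ∑ i ∈ s, Ring.inverse (a i : S) := by
    rw [map_sum]
    exact sum_congr rfl fun i hi => by rw [f.map_ringInverse (hunit i hi), map_natCast]
  have hx : (x : ℚ_[p]) = ∑ i ∈ s, (a i : ℚ_[p])⁻¹ := by
    exact (hmap Coe.ringHom).trans (by simp only [Ring.inverse_eq_inv])
  have hxr : toZModPow r x = ∑ i ∈ s, (a i : ZMod (p ^ r))⁻¹ := by
    rw [hmap]
    exact sum_congr rfl fun i hi =>
      ZMod.ringInverse_eq_inv (by simpa using (hunit i hi).map (toZModPow r))
  rw [← hx, padic_norm_e_of_padicInt, norm_le_pow_iff_mem_span_pow, ← ker_toZModPow,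
    RingHom.mem_ker, hxr]

theorem sum_inv_sq_congruences (p : ℕ) [Fact p.Prime] (hp5 : 5 ≤ p)
    (r : ℕ) (hr : 0 < r) :
    ‖∑ k ∈ (Finset.Icc 1 (p ^ r - 1)).filter (fun k => ¬ p ∣ k),
        ((k : ℚ_[p]) ^ 2)⁻¹‖ ≤ (p : ℝ) ^ (-(r : ℤ)) ∧
    ‖∑ k ∈ (Finset.Icc 1 ((p ^ r - 1) / 2)).filter (fun k => ¬ p ∣ k),
        ((k : ℚ_[p]) ^ 2)⁻¹‖ ≤ (p : ℝ) ^ (-(r : ℤ)) := by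
  have hp : p.Prime := Fact.out
  have h2 : IsUnit (2 : ZMod (p ^ r)) :=
    mod_cast ZMod.isUnit_natCast_prime_of_ne hp Nat.prime_two (by omega) r
  have h3 : IsUnit (3 : ZMod (p ^ r)) :=
    mod_cast ZMod.isUnit_natCast_prime_of_ne hp Nat.prime_three (by omega) r
  have hfull : ∑ k ∈ (Icc 1 (p ^ r - 1)).filter (fun k => ¬ p ∣ k),
      ((k : ZMod (p ^ r)) ^ 2)⁻¹ = 0 := by
    rw [Nat.filter_not_dvd_Icc_eq_filter_coprime_range hp hr.ne',
      ZMod.sum_filter_coprime_range_eq_sum_units fun x => (x ^ 2)⁻¹]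
    exact ZMod.sum_units_inv_pow_eq_zero h2.unit (by norm_num [h3])
  have hhalf : ∑ k ∈ (Icc 1 ((p ^ r - 1) / 2)).filter (fun k => ¬ p ∣ k),
      ((k : ZMod (p ^ r)) ^ 2)⁻¹ = 0 := by
    have := ZMod.sum_filter_Icc_eq_two_nsmul_sum_filter_Icc_half (f := fun x => (x ^ 2)⁻¹)
      (hp.odd_of_ne_two (by omega)).pow (dvd_pow_self p hr.ne') fun x => by rw [neg_sq]
    rw [hfull, nsmul_eq_mul, Nat.cast_two, eq_comm] at this
    exact h2.mul_right_eq_zero.1 this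
  have hcoprime (s : Finset ℕ) : ∀ k ∈ s.filter (fun k => ¬ p ∣ k), p.Coprime (k ^ 2) :=
    fun k hk => ((hp.coprime_iff_not_dvd).2 (mem_filter.1 hk).2).pow_right 2
  simp only [← Nat.cast_pow]
  exact ⟨(PadicInt.norm_sum_inv_natCast_le_pow_iff (hcoprime _) r).2 (by push_cast; exact hfull),
    (PadicInt.norm_sum_inv_natCast_le_pow_iff (hcoprime _) r).2 (by push_cast; exact hhalf)⟩
end

section
/- Let p ≥ 5 be a prime, s a positive integer, and l a nonnegative integer. Then \sum_{j=1, p \nmid j}^{p^s l + p^s - 1} \frac{1}{j^2} \equiv 0 \pmod{p^s}. -/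
/-!
Modulo `p ^ s` the integers `1 ≤ j < p ^ s (l + 1)` prime to `p` run `l + 1` times through the
units of `ZMod (p ^ s)`, so the sum is `l + 1` times `∑ x, x⁻¹ʳ ^ 2` over `ZMod (p ^ s)`
(non-units contribute nothing, as `Ring.inverse` vanishes on them).
Substituting `x ↦ 2⁻¹ x` multiplies that sum by `4`, so it is killed by `3`, a unit as `p ≥ 5`.
-/

open Finset
open scoped Ring

theorem map_ringInverse {M N F : Type*} [MonoidWithZero M] [MonoidWithZero N] [FunLike F M N]
    [MonoidHomClass F M N] (f : F) {x : M} (hx : IsUnit x) : f x⁻¹ʳ = (f x)⁻¹ʳ := by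
  obtain ⟨u, rfl⟩ := hx
  rw [Ring.inverse_unit]
  exact (Ring.inverse_unit (Units.map (f : M →* N) u)).symm

theorem sum_ringInverse_pow_eq_zero {R : Type*} [CommRing R] [Fintype R] (k : ℕ) {a : R}
    (ha : IsUnit a) (hak : IsUnit (a ^ k - 1)) : ∑ x : R, x⁻¹ʳ ^ k = 0 := by
  obtain ⟨u, rfl⟩ := ha
  set S := ∑ x : R, x⁻¹ʳ ^ k
  have hS : S = (u : R) ^ k * S :=
    calc S = ∑ x : R, ((u⁻¹ : Rˣ) * x : R)⁻¹ʳ ^ k :=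
          (Fintype.sum_equiv (Units.mulLeft u⁻¹) _ _ fun x => rfl).symm
      _ = ∑ x : R, (u : R) ^ k * x⁻¹ʳ ^ k := sum_congr rfl fun x _ => by
          rw [Ring.mul_inverse_rev, Ring.inverse_unit, inv_inv, mul_pow, mul_comm]
      _ = (u : R) ^ k * S := (mul_sum ..).symm
  refine hak.mul_right_eq_zero.mp ?_
  linear_combination hS.symm

namespace ZMod

theorem sum_range_natCast {M : Type*} [AddCommMonoid M] (n : ℕ) [NeZero n] (f : ZMod n → M) :
    ∑ j ∈ range n, f j = ∑ x, f x :=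
  sum_nbij' (↑) val (fun _ _ => mem_univ _) (fun x _ => mem_range.mpr x.val_lt)
    (fun _ hj => val_cast_of_lt (mem_range.mp hj)) (fun x _ => natCast_zmod_val x)
    (fun _ _ => rfl)

theorem sum_range_mul_natCast {M : Type*} [AddCommMonoid M] (n m : ℕ) [NeZero n]
    (f : ZMod n → M) : ∑ j ∈ range (n * m), f j = m • ∑ x, f x := by
  induction m with
  | zero => simp
  | succ m ih =>
    rw [mul_add_one, sum_range_add, ih, succ_nsmul, ← sum_range_natCast]
    simp

variable {p : ℕ} [Fact p.Prime] {s : ℕ}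

theorem sum_ringInverse_sq_prime_pow_eq_zero (hp5 : 5 ≤ p) (hs : 0 < s) :
    ∑ x : ZMod (p ^ s), x⁻¹ʳ ^ 2 = 0 := by
  have hunit (m : ℕ) (hm : 0 < m) (hmp : m < p) : IsUnit (m : ZMod (p ^ s)) :=
    (isUnit_natCast_iff_not_dvd_pow Fact.out hs).mpr fun h => (Nat.le_of_dvd hm h).not_gt hmp
  refine sum_ringInverse_pow_eq_zero 2 (a := 2) ?_ ?_
  · exact_mod_cast hunit 2 (by omega) (by omega)
  · norm_num
    exact_mod_cast hunit 3 (by omega) (by omega)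

theorem sum_filter_not_dvd_ringInverse_sq_eq_zero (hp5 : 5 ≤ p) (hs : 0 < s) (l : ℕ) :
    ∑ j ∈ (Icc 1 (p ^ s * l + p ^ s - 1)).filter (fun j => ¬ p ∣ j),
      (j : ZMod (p ^ s))⁻¹ʳ ^ 2 = 0 := by
  rw [← mul_add_one]
  calc _ = ∑ j ∈ range (p ^ s * (l + 1)), (j : ZMod (p ^ s))⁻¹ʳ ^ 2 := by
        refine sum_subset (fun j hj => ?_) fun j hj hjA => ?_
        · simp only [mem_filter, mem_Icc, mem_range] at hj ⊢
          omega
        · have hpj : p ∣ j := by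
            by_contra hpj
            simp only [mem_filter, mem_Icc, mem_range, hpj, not_false_eq_true, and_true] at hj hjA
            obtain rfl : j = 0 := by omega
            exact hpj (dvd_zero p)
          rw [Ring.inverse_non_unit _ ((isUnit_natCast_iff_not_dvd_pow Fact.out hs).not.mpr
            (not_not.mpr hpj)), zero_pow two_ne_zero]
    _ = 0 := by
      rw [sum_range_mul_natCast _ _ fun x => x⁻¹ʳ ^ 2,
        sum_ringInverse_sq_prime_pow_eq_zero hp5 hs, smul_zero]

end ZMod

namespace PadicInt

variable {p : ℕ} [Fact p.Prime]

theorem isUnit_natCast_iff {n : ℕ} : IsUnit (n : ℤ_[p]) ↔ ¬ p ∣ n := by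
  rw [isUnit_iff, norm_natCast_eq_one_iff, Nat.Prime.coprime_iff_not_dvd Fact.out]

theorem norm_le_pow_iff_toZModPow_eq_zero (x : ℤ_[p]) (n : ℕ) :
    ‖x‖ ≤ (p : ℝ) ^ (-n : ℤ) ↔ toZModPow n x = 0 := by
  rw [norm_le_pow_iff_mem_span_pow, ← ker_toZModPow, RingHom.mem_ker]

end PadicInt

theorem sum_inv_sq_up_to_mul_congruence (p : ℕ) [Fact p.Prime] (hp5 : 5 ≤ p)
    (s : ℕ) (hs : 0 < s) (l : ℕ) :
    ‖∑ j ∈ (Finset.Icc 1 (p ^ s * l + p ^ s - 1)).filter (fun j => ¬ p ∣ j),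
        ((j : ℚ_[p]) ^ 2)⁻¹‖ ≤ (p : ℝ) ^ (-(s : ℤ)) := by
  set A := (Icc 1 (p ^ s * l + p ^ s - 1)).filter (fun j => ¬ p ∣ j)
  have hunit (j : ℕ) (hj : j ∈ A) : IsUnit (j : ℤ_[p]) :=
    PadicInt.isUnit_natCast_iff.mpr (mem_filter.mp hj).2
  have hcoe (j : ℕ) (hj : j ∈ A) :
      ((j : ℚ_[p]) ^ 2)⁻¹ = PadicInt.Coe.ringHom ((j : ℤ_[p])⁻¹ʳ ^ 2) := by
    rw [map_pow, map_ringInverse _ (hunit j hj), map_natCast, Ring.inverse_eq_inv, inv_pow]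
  rw [sum_congr rfl hcoe, ← map_sum]
  refine (PadicInt.norm_le_pow_iff_toZModPow_eq_zero _ s).mpr ?_
  rw [map_sum, sum_congr rfl fun j hj => by
    rw [map_pow, map_ringInverse _ (hunit j hj), map_natCast]]
  exact ZMod.sum_filter_not_dvd_ringInverse_sq_eq_zero hp5 hs l
end

section
/- Let p ≥ 5 be a prime and let r, m be positive integers with p ∤ m. Then for all integers s with 0 ≤ s ≤ r-1 and 1 ≤ k ≤ p^{r-s}m - 1, \binom{p^{r-s}m-1}{k}\binom{p^{r-s}m+k}{k} \equiv \binom{p^{r-s-1}m-1}{\lfloor k/p \rfloor}\binom{p^{r-s-1}m + \lfloor k/p \rfloor}{\lfloor k/p \rfloor} (-1)^{k - \lfloor k/p \rfloor}\left(1 - \sum_{j=1, p \nmid j}^{k} \frac{p^{2r-2s} m^2}{j^2}\right) \pmod{p^{4r-4s}}. -/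
/-!
For `n ≥ 1`, `C(n-1,k) C(n+k,k) = ∏_{j=1}^k (n² - j²)/j²`. When `n = p n'`, the factors with
`j = p i` equal `(n'² - i²)/i²` and rebuild the same product for `n'` and `⌊k/p⌋`, while each of
the `k - ⌊k/p⌋` factors with `p ∤ j` is `-(1 - x_j)` where `x_j = n²/j²` has `|x_j|_p = |n|_p²`.
In the ultrametric field `ℚ_p`, `∏ (1 - x_j) ≡ 1 - ∑ x_j` up to the products `x_i x_j`, so the
error has norm at most `|n|_p⁴ ≤ p^{-4(r-s)}`.
-/

open Finset

theorem choose_pred_mul_choose_add_eq_prod {F : Type*} [Field F] [CharZero F] {n : ℕ}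
    (hn : 0 < n) (k : ℕ) :
    ((n - 1).choose k : F) * (n + k).choose k = ∏ j ∈ Icc 1 k, (((n : F) ^ 2 - j ^ 2) / j ^ 2) := by
  induction k with
  | zero => simp
  | succ k ih =>
    have hdesc : ((n - 1).choose (k + 1) : F) * (k + 1) = (n - 1).choose k * (n - (k + 1)) := by
      rcases lt_or_ge k n with hkn | hkn
      · have h := Nat.choose_succ_right_eq (n - 1) k
        rw [show n - 1 - k = n - (k + 1) by omega] at h
        rw [← Nat.cast_add_one, ← Nat.cast_sub hkn, ← Nat.cast_mul, h, Nat.cast_mul]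
      · simp [Nat.choose_eq_zero_of_lt (by omega : n - 1 < k),
          Nat.choose_eq_zero_of_lt (by omega : n - 1 < k + 1)]
    have hasc :
        ((n + (k + 1)).choose (k + 1) : F) * (k + 1) = (n + (k + 1)) * (n + k).choose k := by
      exact_mod_cast (Nat.add_one_mul_choose_eq (n + k) k).symm
    have hk : (k + 1 : F) ≠ 0 := k.cast_add_one_ne_zero
    rw [prod_Icc_succ_top (by omega), ← ih]
    push_cast
    field_simp
    linear_combination ((n + (k + 1)).choose (k + 1) * (k + 1) : F) * hdesc +
      ((n - 1).choose k * (n - (k + 1)) : F) * hasc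

theorem filter_dvd_Icc_one_eq_image {p : ℕ} (hp : 0 < p) (k : ℕ) :
    (Icc 1 k).filter (p ∣ ·) = (Icc 1 (k / p)).image (p * ·) := by
  ext j
  simp only [mem_filter, mem_Icc, mem_image, Nat.le_div_iff_mul_le hp]
  constructor
  · rintro ⟨⟨hj1, hjk⟩, i, rfl⟩
    exact ⟨i, ⟨Nat.pos_of_mul_pos_left hj1, by linarith⟩, rfl⟩
  · rintro ⟨i, ⟨hi1, hik⟩, rfl⟩
    exact ⟨⟨Nat.mul_pos hp hi1, by linarith⟩, dvd_mul_right p i⟩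

theorem card_filter_not_dvd_Icc_one (p k : ℕ) : #{j ∈ Icc 1 k | ¬ p ∣ j} = k - k / p := by
  have h := card_filter_add_card_filter_not (s := Ioc 0 k) (p ∣ ·)
  rw [Nat.Ioc_filter_dvd_card_eq_div, Nat.card_Ioc] at h
  rw [show Icc 1 k = Ioc 0 k from Icc_succ_left_eq_Ioc 0 k]
  omega

theorem choose_pred_mul_choose_add_eq_mul_prod {F : Type*} [Field F] [CharZero F] {p n : ℕ}
    (hp : 0 < p) (hn : 0 < n) (k : ℕ) :
    ((p * n - 1).choose k : F) * (p * n + k).choose k =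
      (n - 1).choose (k / p) * (n + k / p).choose (k / p) *
        ∏ j ∈ Icc 1 k with ¬ p ∣ j, ((((p * n : ℕ) : F)) ^ 2 - j ^ 2) / j ^ 2 := by
  rw [choose_pred_mul_choose_add_eq_prod (by positivity), choose_pred_mul_choose_add_eq_prod hn,
    ← prod_filter_mul_prod_filter_not (Icc 1 k) (p ∣ ·), filter_dvd_Icc_one_eq_image hp,
    prod_image fun a _ b _ h => Nat.eq_of_mul_eq_mul_left hp h]
  congr 1
  refine prod_congr rfl fun i hi => ?_
  have hi0 : (i : F) ≠ 0 := Nat.cast_ne_zero.2 (by simp at hi; omega)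
  have hp0 : (p : F) ≠ 0 := Nat.cast_ne_zero.2 hp.ne'
  push_cast
  field_simp

theorem norm_prod_one_sub_sub_one_sub_sum_le {R ι : Type*} [NormedCommRing R] [NormOneClass R]
    [IsUltrametricDist R] (s : Finset ι) (x : ι → R) {ε : ℝ} (hε : ε ≤ 1)
    (hx : ∀ i ∈ s, ‖x i‖ ≤ ε) :
    ‖∏ i ∈ s, (1 - x i) - (1 - ∑ i ∈ s, x i)‖ ≤ ε ^ 2 := by
  classical
  induction s using Finset.induction_on with
  | empty => simpa using sq_nonneg ε
  | @insert a s ha ih =>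
    have hxa := hx a (mem_insert_self a s)
    have hxs : ∀ i ∈ s, ‖x i‖ ≤ ε := fun i hi => hx i (mem_insert_of_mem hi)
    have hε0 : 0 ≤ ε := (norm_nonneg _).trans hxa
    have h1 : ‖1 - x a‖ ≤ 1 := by
      simpa [← sub_eq_add_neg, hxa.trans hε] using IsUltrametricDist.norm_add_le_max (1 : R) (-x a)
    have hsum : ‖∑ i ∈ s, x i‖ ≤ ε := IsUltrametricDist.norm_sum_le_of_forall_le_of_nonneg hε0 hxs
    rw [prod_insert ha, sum_insert ha, show ∀ P S : R, (1 - x a) * P - (1 - (x a + S)) =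
      (1 - x a) * (P - (1 - S)) + x a * S by intros; ring]
    refine (IsUltrametricDist.norm_add_le_max _ _).trans (max_le ?_ ?_)
    · calc ‖(1 - x a) * (∏ i ∈ s, (1 - x i) - (1 - ∑ i ∈ s, x i))‖
          ≤ 1 * ε ^ 2 :=
            (norm_mul_le _ _).trans (mul_le_mul h1 (ih hxs) (norm_nonneg _) zero_le_one)
        _ = ε ^ 2 := one_mul _
    · exact (norm_mul_le _ _).trans (sq ε ▸ mul_le_mul hxa hsum (norm_nonneg _) hε0)

theorem norm_choose_mul_choose_sub_le {p : ℕ} [Fact p.Prime] {n n' : ℕ} (hn : n = p * n')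
    (hn' : 0 < n') (k : ℕ) :
    ‖((n - 1).choose k : ℚ_[p]) * (n + k).choose k -
      (n' - 1).choose (k / p) * (n' + k / p).choose (k / p) * (-1) ^ (k - k / p) *
        (1 - ∑ j ∈ Icc 1 k with ¬ p ∣ j, (n : ℚ_[p]) ^ 2 / (j : ℚ_[p]) ^ 2)‖ ≤
      ‖(n : ℚ_[p])‖ ^ 4 := by
  subst hn
  set S := {j ∈ Icc 1 k | ¬ p ∣ j}
  set x : ℕ → ℚ_[p] := fun j => ((p * n' : ℕ) : ℚ_[p]) ^ 2 / (j : ℚ_[p]) ^ 2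
  have hS : ∀ j ∈ S, ‖(j : ℚ_[p])‖ = 1 := fun j hj => by
    simp only [S, mem_filter] at hj
    exact Padic.norm_natCast_eq_one_iff.2
      ((Nat.coprime_or_dvd_of_prime Fact.out j).resolve_right hj.2)
  have hprod : ∏ j ∈ S, ((((p * n' : ℕ) : ℚ_[p])) ^ 2 - j ^ 2) / j ^ 2 =
      (-1) ^ (k - k / p) * ∏ j ∈ S, (1 - x j) := by
    rw [← card_filter_not_dvd_Icc_one, ← prod_const, ← prod_mul_distrib]
    refine prod_congr rfl fun j hj => ?_
    have hj0 : (j : ℚ_[p]) ≠ 0 := norm_ne_zero_iff.1 (by rw [hS j hj]; exact one_ne_zero)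
    simp only [x]
    field_simp
    ring
  have hx : ∀ j ∈ S, ‖x j‖ ≤ ‖((p * n' : ℕ) : ℚ_[p])‖ ^ 2 := fun j hj => by
    simp [x, norm_div, norm_pow, hS j hj]
  have hA : ‖((n' - 1).choose (k / p) * (n' + k / p).choose (k / p) * (-1) ^ (k - k / p) :
      ℚ_[p])‖ ≤ 1 := by
    simpa using Padic.norm_int_le_one (p := p)
      ((n' - 1).choose (k / p) * (n' + k / p).choose (k / p) * (-1) ^ (k - k / p))
  rw [choose_pred_mul_choose_add_eq_mul_prod (Fact.out : p.Prime).pos hn', hprod, ← mul_assoc,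
    ← mul_sub, norm_mul]
  calc _ ≤ 1 * (‖((p * n' : ℕ) : ℚ_[p])‖ ^ 2) ^ 2 :=
        mul_le_mul hA (norm_prod_one_sub_sub_one_sub_sum_le S x
          (pow_le_one₀ (norm_nonneg _) (IsUltrametricDist.norm_natCast_le_one ℚ_[p] _)) hx)
          (norm_nonneg _) zero_le_one
    _ = _ := by ring

theorem binom_prod_congruence_general (p : ℕ) [Fact p.Prime]
    (r m : ℕ) (hr : 0 < r) (hm : 0 < m)
    (s : ℕ) (hs : s ≤ r - 1) (k : ℕ) :
    ‖(((p ^ (r - s) * m - 1).choose k : ℚ_[p]) *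
        ((p ^ (r - s) * m + k).choose k : ℚ_[p]) -
      ((p ^ (r - s - 1) * m - 1).choose (k / p) : ℚ_[p]) *
        ((p ^ (r - s - 1) * m + k / p).choose (k / p) : ℚ_[p]) *
        (-1) ^ (k - k / p) *
        (1 - ∑ j ∈ (Finset.Icc 1 k).filter (fun j => ¬ p ∣ j),
              (p : ℚ_[p]) ^ (2 * r - 2 * s) * (m : ℚ_[p]) ^ 2 / ((j : ℚ_[p]) ^ 2)))‖ ≤
      (p : ℝ) ^ (-(4 * (r : ℤ) - 4 * (s : ℤ))) := by
  have hp : p.Prime := Fact.out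
  have hn : p ^ (r - s) * m = p * (p ^ (r - s - 1) * m) := by
    rw [← mul_assoc, ← pow_succ']
    congr 2
    omega
  have hsq : (p : ℚ_[p]) ^ (2 * r - 2 * s) * (m : ℚ_[p]) ^ 2 =
      ((p ^ (r - s) * m : ℕ) : ℚ_[p]) ^ 2 := by
    rw [show 2 * r - 2 * s = (r - s) * 2 by omega, pow_mul]
    push_cast
    ring
  have hnorm : ‖((p ^ (r - s) * m : ℕ) : ℚ_[p])‖ ≤ (p : ℝ) ^ (-((r - s : ℕ) : ℤ)) := by
    have h := (Padic.norm_int_le_pow_iff_dvd ((p ^ (r - s) * m : ℕ) : ℤ) (r - s)).2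
      (by push_cast; exact dvd_mul_right _ _)
    rwa [Int.cast_natCast] at h
  rw [hsq]
  calc _ ≤ _ := norm_choose_mul_choose_sub_le hn (Nat.mul_pos (pow_pos hp.pos _) hm) k
    _ ≤ ((p : ℝ) ^ (-((r - s : ℕ) : ℤ))) ^ 4 := pow_le_pow_left₀ (norm_nonneg _) hnorm 4
    _ = _ := by
      rw [← zpow_natCast, ← zpow_mul]
      congr 1
      omega

theorem binom_prod_congruence (p : ℕ) [Fact p.Prime] (hp5 : 5 ≤ p)
    (r m : ℕ) (hr : 0 < r) (hm : 0 < m) (hpm : ¬ p ∣ m)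
    (s : ℕ) (hs : s ≤ r - 1) (k : ℕ) (hk1 : 1 ≤ k) (hk2 : k ≤ p ^ (r - s) * m - 1) :
    ‖(((p ^ (r - s) * m - 1).choose k : ℚ_[p]) *
        ((p ^ (r - s) * m + k).choose k : ℚ_[p]) -
      ((p ^ (r - s - 1) * m - 1).choose (k / p) : ℚ_[p]) *
        ((p ^ (r - s - 1) * m + k / p).choose (k / p) : ℚ_[p]) *
        (-1) ^ (k - k / p) *
        (1 - ∑ j ∈ (Finset.Icc 1 k).filter (fun j => ¬ p ∣ j),
              (p : ℚ_[p]) ^ (2 * r - 2 * s) * (m : ℚ_[p]) ^ 2 / ((j : ℚ_[p]) ^ 2)))‖ ≤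
      (p : ℝ) ^ (-(4 * (r : ℤ) - 4 * (s : ℤ))) :=
  binom_prod_congruence_general p r m hr hm s hs k
end
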